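/- arXiv:math/0502139 — 3 statements merged into one kernel-verified Lean document; each statement's English description precedes it below -/
import Mathlib

section
/- Let c₁, c₂ ∈ ℂ and r₁, r₂ > 0 with (c₁, r₁) ≠ (c₂, r₂), and suppose |c₁ − c₂| > |r₁ − r₂|. For j = 1,2 define X_j = {(z,w) ∈ ℂ² : (z − c_j)(w − conj(c_j)) = r_j² and |z − c_j| ≤ r_j}. Then X₁ ∩ X₂ = {(z, conj(z)) : z ∈ ℂ, |z − c₁| = r₁ and |z − c₂| = r₂}; in particular X₁ ∩ X₂ is contained in the totally real plane Σ = {(z,w) ∈ ℂ² : w = conj(z)}. -/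
/-!
For `(z, w)` in the complexified circle `X(c, r)` put `v = w - conj z`. Then
`(z - c) v = r² - ‖z - c‖²` is a nonnegative real, so for a point of `X₁ ∩ X₂` with `v ≠ 0`
both `z - c₁` and `z - c₂` lie on the ray through `conj v`. Hence `‖c₁ - c₂‖ = |ρ₁ - ρ₂|` with
`ρⱼ = ‖z - cⱼ‖`, while `rⱼ² = ρⱼ² + ‖v‖ ρⱼ`. The map `ρ ↦ √(ρ² + kρ)` does not shrink distances,
so `|ρ₁ - ρ₂| ≤ |r₁ - r₂|`, contradicting the hypothesis. Thus `w = conj z`, and then the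
defining equation reads `‖z - cⱼ‖² = rⱼ²`.
-/

open Complex ComplexConjugate

lemma abs_sub_le_abs_sub_of_sq_eq_sq_add_mul {k ρ₁ ρ₂ r₁ r₂ : ℝ} (hk : 0 ≤ k)
    (hρ₁ : 0 ≤ ρ₁) (hρ₂ : 0 ≤ ρ₂) (hr₁ : 0 ≤ r₁) (hr₂ : 0 ≤ r₂)
    (h₁ : r₁ ^ 2 = ρ₁ ^ 2 + k * ρ₁) (h₂ : r₂ ^ 2 = ρ₂ ^ 2 + k * ρ₂) :
    |ρ₁ - ρ₂| ≤ |r₁ - r₂| := by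
  have hle₁ : r₁ ≤ ρ₁ + k / 2 := by nlinarith
  have hle₂ : r₂ ≤ ρ₂ + k / 2 := by nlinarith
  rcases (add_nonneg hr₁ hr₂).eq_or_lt with hsum | hsum
  · have : ρ₁ = 0 ∧ ρ₂ = 0 := by constructor <;> nlinarith
    simp [this.1, this.2]
  refine le_of_mul_le_mul_right ?_ hsum
  calc |ρ₁ - ρ₂| * (r₁ + r₂) ≤ |ρ₁ - ρ₂| * (ρ₁ + ρ₂ + k) :=
        mul_le_mul_of_nonneg_left (by linarith) (abs_nonneg _)
    _ = |(ρ₁ - ρ₂) * (ρ₁ + ρ₂ + k)| := by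
      rw [abs_mul, abs_of_nonneg (by positivity : 0 ≤ ρ₁ + ρ₂ + k)]
    _ = |(r₁ - r₂) * (r₁ + r₂)| := by congr 1; linear_combination h₂ - h₁
    _ = |r₁ - r₂| * (r₁ + r₂) := by rw [abs_mul, abs_of_pos hsum]

lemma sameRay_of_mul_eq_ofReal {x y v : ℂ} {s t : ℝ} (hs : 0 ≤ s) (ht : 0 ≤ t) (hv : v ≠ 0)
    (hx : x * v = s) (hy : y * v = t) : SameRay ℝ x y := by
  rw [eq_div_of_mul_eq hv hx, eq_div_of_mul_eq hv hy, div_eq_mul_inv, div_eq_mul_inv,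
    ← real_smul, ← real_smul]
  exact ((SameRay.refl _).nonneg_smul_left hs).nonneg_smul_right ht

lemma sub_mul_sub_conj (z w c : ℂ) :
    (z - c) * (w - conj z) = (z - c) * (w - conj c) - (‖z - c‖ ^ 2 : ℝ) := by
  push_cast
  rw [← mul_conj', map_sub]
  ring

def complexifiedCircle (c : ℂ) (r : ℝ) : Set (ℂ × ℂ) :=
  {p | (p.1 - c) * (p.2 - conj c) = (r : ℂ) ^ 2 ∧ ‖p.1 - c‖ ≤ r}

section

variable {c : ℂ} {r : ℝ} {p : ℂ × ℂ}

lemma nonneg_of_mem_complexifiedCircle (hp : p ∈ complexifiedCircle c r) : 0 ≤ r :=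
  (norm_nonneg _).trans hp.2

lemma sub_mul_sub_conj_of_mem_complexifiedCircle (hp : p ∈ complexifiedCircle c r) :
    (p.1 - c) * (p.2 - conj p.1) = (r ^ 2 - ‖p.1 - c‖ ^ 2 : ℝ) := by
  rw [sub_mul_sub_conj, hp.1]
  push_cast
  ring

lemma sq_norm_le_of_mem_complexifiedCircle (hp : p ∈ complexifiedCircle c r) :
    ‖p.1 - c‖ ^ 2 ≤ r ^ 2 :=
  pow_le_pow_left₀ (norm_nonneg _) hp.2 2

lemma sq_eq_of_mem_complexifiedCircle (hp : p ∈ complexifiedCircle c r) :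
    r ^ 2 = ‖p.1 - c‖ ^ 2 + ‖p.2 - conj p.1‖ * ‖p.1 - c‖ := by
  have := congrArg norm (sub_mul_sub_conj_of_mem_complexifiedCircle hp)
  rw [norm_mul, norm_real,
    Real.norm_of_nonneg (sub_nonneg.2 (sq_norm_le_of_mem_complexifiedCircle hp))] at this
  linarith

lemma mk_conj_mem_complexifiedCircle_iff {z : ℂ} :
    (z, conj z) ∈ complexifiedCircle c r ↔ ‖z - c‖ = r := by
  have hsq : (z - c) * (conj z - conj c) = (‖z - c‖ : ℂ) ^ 2 := by rw [← map_sub, mul_conj']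
  refine ⟨fun hp => ?_, fun h => ⟨by rw [hsq, h], h.le⟩⟩
  have : ‖z - c‖ ^ 2 = r ^ 2 := by exact_mod_cast hsq.symm.trans hp.1
  exact (sq_eq_sq₀ (norm_nonneg _) (nonneg_of_mem_complexifiedCircle hp)).1 this

end

lemma snd_eq_conj_fst_of_mem_complexifiedCircle_inter {c₁ c₂ : ℂ} {r₁ r₂ : ℝ} {p : ℂ × ℂ}
    (h : |r₁ - r₂| < ‖c₁ - c₂‖)
    (hp : p ∈ complexifiedCircle c₁ r₁ ∩ complexifiedCircle c₂ r₂) : p.2 = conj p.1 := by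
  by_contra hne
  obtain ⟨hp₁, hp₂⟩ := hp
  have hray : SameRay ℝ (p.1 - c₁) (p.1 - c₂) :=
    sameRay_of_mul_eq_ofReal (sub_nonneg.2 (sq_norm_le_of_mem_complexifiedCircle hp₁))
      (sub_nonneg.2 (sq_norm_le_of_mem_complexifiedCircle hp₂)) (sub_ne_zero.2 hne)
      (sub_mul_sub_conj_of_mem_complexifiedCircle hp₁)
      (sub_mul_sub_conj_of_mem_complexifiedCircle hp₂)
  have hdist : ‖c₁ - c₂‖ = |‖p.1 - c₁‖ - ‖p.1 - c₂‖| := by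
    rw [← hray.norm_sub, sub_sub_sub_cancel_left, norm_sub_rev]
  have := abs_sub_le_abs_sub_of_sq_eq_sq_add_mul (norm_nonneg _) (norm_nonneg _) (norm_nonneg _)
    (nonneg_of_mem_complexifiedCircle hp₁) (nonneg_of_mem_complexifiedCircle hp₂)
    (sq_eq_of_mem_complexifiedCircle hp₁) (sq_eq_of_mem_complexifiedCircle hp₂)
  linarith

lemma complexifiedCircle_inter_complexifiedCircle {c₁ c₂ : ℂ} {r₁ r₂ : ℝ}
    (h : |r₁ - r₂| < ‖c₁ - c₂‖) :
    complexifiedCircle c₁ r₁ ∩ complexifiedCircle c₂ r₂ =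
      {p | ∃ z : ℂ, p = (z, conj z) ∧ ‖z - c₁‖ = r₁ ∧ ‖z - c₂‖ = r₂} := by
  ext ⟨z, w⟩
  constructor
  · intro hp
    obtain rfl : w = conj z := snd_eq_conj_fst_of_mem_complexifiedCircle_inter h hp
    exact ⟨z, rfl, mk_conj_mem_complexifiedCircle_iff.1 hp.1,
      mk_conj_mem_complexifiedCircle_iff.1 hp.2⟩
  · rintro ⟨z, hzw, h₁, h₂⟩
    rw [hzw]
    exact ⟨mk_conj_mem_complexifiedCircle_iff.2 h₁, mk_conj_mem_complexifiedCircle_iff.2 h₂⟩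

theorem complexified_circles_intersection_general
    (c₁ c₂ : ℂ) (r₁ r₂ : ℝ)
    (h : ‖c₁ - c₂‖ > |r₁ - r₂|)
    (X₁ X₂ : Set (ℂ × ℂ))
    (hX₁ : X₁ = {p : ℂ × ℂ |
      (p.1 - c₁) * (p.2 - (starRingEnd ℂ) c₁) = (r₁ : ℂ) ^ 2 ∧
      ‖p.1 - c₁‖ ≤ r₁})
    (hX₂ : X₂ = {p : ℂ × ℂ |
      (p.1 - c₂) * (p.2 - (starRingEnd ℂ) c₂) = (r₂ : ℂ) ^ 2 ∧
      ‖p.1 - c₂‖ ≤ r₂}) :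
    X₁ ∩ X₂ = {p : ℂ × ℂ | ∃ z : ℂ, p = (z, (starRingEnd ℂ) z) ∧
      ‖z - c₁‖ = r₁ ∧ ‖z - c₂‖ = r₂} ∧
    X₁ ∩ X₂ ⊆ {p : ℂ × ℂ | p.2 = (starRingEnd ℂ) p.1} := by
  obtain rfl : X₁ = complexifiedCircle c₁ r₁ := hX₁
  obtain rfl : X₂ = complexifiedCircle c₂ r₂ := hX₂
  exact ⟨complexifiedCircle_inter_complexifiedCircle h,
    fun _ hp => snd_eq_conj_fst_of_mem_complexifiedCircle_inter h hp⟩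

/-- Lemma 1: the complexifications of two distinct circles, neither contained in
the closed disc bounded by the other, intersect only over the common points of
the circles, lifted to the totally real plane `Σ = {w = conj z}`. -/
theorem complexified_circles_intersection
    (c₁ c₂ : ℂ) (r₁ r₂ : ℝ) (hr₁ : 0 < r₁) (hr₂ : 0 < r₂)
    (hne : (c₁, r₁) ≠ (c₂, r₂))
    (h : ‖c₁ - c₂‖ > |r₁ - r₂|)
    (X₁ X₂ : Set (ℂ × ℂ))
    (hX₁ : X₁ = {p : ℂ × ℂ |
      (p.1 - c₁) * (p.2 - (starRingEnd ℂ) c₁) = (r₁ : ℂ) ^ 2 ∧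
      ‖p.1 - c₁‖ ≤ r₁})
    (hX₂ : X₂ = {p : ℂ × ℂ |
      (p.1 - c₂) * (p.2 - (starRingEnd ℂ) c₂) = (r₂ : ℂ) ^ 2 ∧
      ‖p.1 - c₂‖ ≤ r₂}) :
    X₁ ∩ X₂ = {p : ℂ × ℂ | ∃ z : ℂ, p = (z, (starRingEnd ℂ) z) ∧
      ‖z - c₁‖ = r₁ ∧ ‖z - c₂‖ = r₂} ∧
    X₁ ∩ X₂ ⊆ {p : ℂ × ℂ | p.2 = (starRingEnd ℂ) p.1} :=
  complexified_circles_intersection_general c₁ c₂ r₁ r₂ h X₁ X₂ hX₁ hX₂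
end

section
/- Let c₁, c₂ ∈ ℂ and r₁, r₂ > 0, and suppose |c₁ − c₂| > |r₁ − r₂| and (c₁, r₁) ≠ (c₂, r₂). For j = 1,2 define X_j = {(z,w) ∈ ℂ² : (z − c_j)(w − conj(c_j)) = r_j², |z − c_j| ≤ r_j}. Then the set X₁ ∩ X₂ has at most two elements. -/
/-! Eliminating `w` from `(z - c₁)(w - d₁) = s₁` and `(z - c₂)(w - d₂) = s₂` leaves a quadratic
equation in `z` which vanishes identically only if the two equations coincide, and since `s₁ ≠ 0`
the first equation determines `w` from `z`. So two distinct complexified circles meet in at most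
two points. -/

open Polynomial

theorem Set.encard_setOf_quadratic_eq_zero_le_two {R : Type*} [CommRing R] [IsDomain R]
    {a b c : R} (h : a ≠ 0 ∨ b ≠ 0 ∨ c ≠ 0) :
    {z : R | a * z ^ 2 + b * z + c = 0}.encard ≤ 2 := by
  classical
  set p : R[X] := C a * X ^ 2 + C b * X + C c
  have hp : p ≠ 0 := by
    intro hp
    have h2 := congrArg (coeff · 2) hp
    have h1 := congrArg (coeff · 1) hp
    have h0 := congrArg (coeff · 0) hp
    simp [p, coeff_X, coeff_C] at h2 h1 h0
    tauto
  have hsub : {z : R | a * z ^ 2 + b * z + c = 0} ⊆ ↑p.roots.toFinset := fun z hz => by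
    simpa [p, hp] using hz
  calc {z : R | a * z ^ 2 + b * z + c = 0}.encard
      ≤ (p.roots.toFinset : Set R).encard := Set.encard_le_encard hsub
    _ = p.roots.toFinset.card := Set.encard_coe_eq_coe_finsetCard _
    _ ≤ 2 := by
      exact_mod_cast (Multiset.toFinset_card_le p.roots).trans
        ((card_roots' p).trans natDegree_quadratic_le)

section Hyperbola

variable {K : Type*} [CommRing K]

/-- The complexification of the circle with center `c` and radius `r` is
`hyperbola c (conj c) (r ^ 2)`. -/
def hyperbola (c d s : K) : Set (K × K) := {p | (p.1 - c) * (p.2 - d) = s}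

theorem quadratic_eq_zero_of_mem_hyperbola_inter {c₁ d₁ s₁ c₂ d₂ s₂ : K} {p : K × K}
    (hp : p ∈ hyperbola c₁ d₁ s₁ ∩ hyperbola c₂ d₂ s₂) :
    (d₁ - d₂) * p.1 ^ 2 + (s₁ - s₂ - (d₁ - d₂) * (c₁ + c₂)) * p.1
      + ((d₁ - d₂) * c₁ * c₂ - s₁ * c₂ + s₂ * c₁) = 0 := by
  obtain ⟨h₁ : (p.1 - c₁) * (p.2 - d₁) = s₁, h₂ : (p.1 - c₂) * (p.2 - d₂) = s₂⟩ := hp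
  linear_combination (p.1 - c₁) * h₂ - (p.1 - c₂) * h₁

variable [IsDomain K]

theorem injOn_fst_hyperbola {c d s : K} (hs : s ≠ 0) : Set.InjOn Prod.fst (hyperbola c d s) := by
  rintro ⟨z, w⟩ hw ⟨z', w'⟩ hw' (rfl : z = z')
  have hz : z - c ≠ 0 := left_ne_zero_of_mul (hw.trans_ne hs)
  have : w - d = w' - d := mul_left_cancel₀ hz (hw.trans hw'.symm)
  simp_all

theorem encard_hyperbola_inter_hyperbola_le_two {c₁ d₁ s₁ c₂ d₂ s₂ : K} (hs₁ : s₁ ≠ 0)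
    (hne : (c₁, d₁, s₁) ≠ (c₂, d₂, s₂)) :
    (hyperbola c₁ d₁ s₁ ∩ hyperbola c₂ d₂ s₂).encard ≤ 2 := by
  have hcoeff : d₁ - d₂ ≠ 0 ∨ s₁ - s₂ - (d₁ - d₂) * (c₁ + c₂) ≠ 0 ∨
      (d₁ - d₂) * c₁ * c₂ - s₁ * c₂ + s₂ * c₁ ≠ 0 := by
    by_contra! h
    obtain ⟨hd, hs, hc⟩ := h
    have hd : d₁ = d₂ := sub_eq_zero.mp hd
    have hs : s₁ = s₂ := by linear_combination hs + (c₁ + c₂) * hd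
    have hc : c₁ = c₂ := mul_left_cancel₀ hs₁ (by linear_combination hc + c₁ * hs - c₁ * c₂ * hd)
    exact hne (by rw [hc, hd, hs])
  rw [← (injOn_fst_hyperbola hs₁).mono Set.inter_subset_left |>.encard_image]
  refine (Set.encard_le_encard ?_).trans (Set.encard_setOf_quadratic_eq_zero_le_two hcoeff)
  rintro _ ⟨p, hp, rfl⟩
  exact quadratic_eq_zero_of_mem_hyperbola_inter hp

end Hyperbola

theorem complexified_circles_intersection_encard_general
    (c₁ c₂ : ℂ) (r₁ r₂ : ℝ) (hr₁ : 0 < r₁) (hr₂ : 0 < r₂)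
    (hne : (c₁, r₁) ≠ (c₂, r₂))
    (X₁ X₂ : Set (ℂ × ℂ))
    (hX₁ : X₁ = {p : ℂ × ℂ |
      (p.1 - c₁) * (p.2 - (starRingEnd ℂ) c₁) = (r₁ : ℂ) ^ 2 ∧
      ‖p.1 - c₁‖ ≤ r₁})
    (hX₂ : X₂ = {p : ℂ × ℂ |
      (p.1 - c₂) * (p.2 - (starRingEnd ℂ) c₂) = (r₂ : ℂ) ^ 2 ∧
      ‖p.1 - c₂‖ ≤ r₂}) :
    (X₁ ∩ X₂).encard ≤ 2 := by
  have hsub : X₁ ∩ X₂ ⊆ hyperbola c₁ (starRingEnd ℂ c₁) ((r₁ : ℂ) ^ 2) ∩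
      hyperbola c₂ (starRingEnd ℂ c₂) ((r₂ : ℂ) ^ 2) := by
    subst hX₁ hX₂
    exact Set.inter_subset_inter (fun _ hp => hp.1) (fun _ hp => hp.1)
  refine (Set.encard_le_encard hsub).trans (encard_hyperbola_inter_hyperbola_le_two ?_ ?_)
  · exact_mod_cast (pow_pos hr₁ 2).ne'
  · intro h
    simp only [Prod.mk.injEq] at h
    obtain ⟨hc, -, hr⟩ := h
    have hr : r₁ ^ 2 = r₂ ^ 2 := by exact_mod_cast hr
    exact hne (by rw [hc, (sq_eq_sq₀ hr₁.le hr₂.le).mp hr])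

/-- Case 2 of Lemma 1: the complexifications of two distinct circles, neither
contained in the closed disc bounded by the other, meet in at most two points. -/
theorem complexified_circles_intersection_encard
    (c₁ c₂ : ℂ) (r₁ r₂ : ℝ) (hr₁ : 0 < r₁) (hr₂ : 0 < r₂)
    (hne : (c₁, r₁) ≠ (c₂, r₂))
    (h : ‖c₁ - c₂‖ > |r₁ - r₂|)
    (X₁ X₂ : Set (ℂ × ℂ))
    (hX₁ : X₁ = {p : ℂ × ℂ |
      (p.1 - c₁) * (p.2 - (starRingEnd ℂ) c₁) = (r₁ : ℂ) ^ 2 ∧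
      ‖p.1 - c₁‖ ≤ r₁})
    (hX₂ : X₂ = {p : ℂ × ℂ |
      (p.1 - c₂) * (p.2 - (starRingEnd ℂ) c₂) = (r₂ : ℂ) ^ 2 ∧
      ‖p.1 - c₂‖ ≤ r₂}) :
    (X₁ ∩ X₂).encard ≤ 2 :=
  complexified_circles_intersection_encard_general c₁ c₂ r₁ r₂ hr₁ hr₂ hne X₁ X₂ hX₁ hX₂
end

section
/- Let c₁, c₂ ∈ ℂ and r₁, r₂ > 0 with (c₁, r₁) ≠ (c₂, r₂) and |c₁ − c₂| > |r₁ − r₂|. Let z ∈ ℂ satisfy |z − c₁| < r₁ and |z − c₂| < r₂. Then conj(c₁) + r₁²/(z − c₁) ≠ conj(c₂) + r₂²/(z − c₂). -/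
/-!
For `w(z) = circleDual c r z = conj c + r² / (z - c)` one has
`w(z) - conj z = (r² - |z - c|²) / (z - c)`, so equal values of `w` force
`(z - c₁) / p₁ = (z - c₂) / p₂ =: u` with `pᵢ = rᵢ² - |z - cᵢ|² > 0`. Hence `z - cᵢ = pᵢ u`,
`rᵢ² = pᵢ + pᵢ² |u|²` and `|c₁ - c₂| = |p₁ - p₂| |u|`. Along the family `r(p) = √(p + p² m²)`
one has `|r(p₁) - r(p₂)| ≥ m |p₁ - p₂|`, so the two circles would be nested:
`|c₁ - c₂| ≤ |r₁ - r₂|`.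
-/

open ComplexConjugate

lemma mul_abs_sub_le_abs_sub_of_sq_eq {m p₁ p₂ r₁ r₂ : ℝ} (hm : 0 ≤ m) (hp₁ : 0 ≤ p₁)
    (hp₂ : 0 ≤ p₂) (hr₁ : 0 ≤ r₁) (hr₂ : 0 ≤ r₂) (h₁ : r₁ ^ 2 = p₁ + (m * p₁) ^ 2)
    (h₂ : r₂ ^ 2 = p₂ + (m * p₂) ^ 2) :
    m * |p₁ - p₂| ≤ |r₁ - r₂| := by
  have hS : 0 ≤ p₁ + p₂ + 2 * m ^ 2 * p₁ * p₂ := by positivity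
  -- `(p₁ + p₂ + 2 m² p₁ p₂)² - (2 r₁ r₂)² = (p₁ - p₂)²`
  have hsq : (2 * r₁ * r₂) ^ 2 ≤ (p₁ + p₂ + 2 * m ^ 2 * p₁ * p₂) ^ 2 := by
    have : (2 * r₁ * r₂) ^ 2 = 4 * r₁ ^ 2 * r₂ ^ 2 := by ring
    rw [this, h₁, h₂]
    nlinarith [sq_nonneg (p₁ - p₂)]
  have hprod : 2 * r₁ * r₂ ≤ p₁ + p₂ + 2 * m ^ 2 * p₁ * p₂ :=
    (pow_le_pow_iff_left₀ (by positivity) hS two_ne_zero).mp hsq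
  rw [← abs_of_nonneg hm, ← abs_mul, ← sq_le_sq]
  nlinarith

noncomputable def circleDual (c : ℂ) (r : ℝ) (z : ℂ) : ℂ :=
  conj c + (r : ℂ) ^ 2 / (z - c)

lemma circleDual_sub_conj (c : ℂ) (r : ℝ) (z : ℂ) :
    circleDual c r z - conj z = ((r ^ 2 - ‖z - c‖ ^ 2 : ℝ) : ℂ) / (z - c) := by
  rcases eq_or_ne (z - c) 0 with hzc | hzc
  · simp [circleDual, sub_eq_zero.mp hzc]
  · rw [circleDual, eq_div_iff hzc]
    push_cast
    rw [← Complex.mul_conj', map_sub]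
    field_simp
    ring

lemma div_eq_div_of_circleDual_eq {c₁ c₂ z : ℂ} {r₁ r₂ : ℝ}
    (h : circleDual c₁ r₁ z = circleDual c₂ r₂ z) :
    (z - c₁) / ((r₁ ^ 2 - ‖z - c₁‖ ^ 2 : ℝ) : ℂ) =
      (z - c₂) / ((r₂ ^ 2 - ‖z - c₂‖ ^ 2 : ℝ) : ℂ) := by
  rw [← inv_inj, inv_div, inv_div, ← circleDual_sub_conj, ← circleDual_sub_conj, h]

lemma norm_sub_le_abs_sub_of_div_eq {c₁ c₂ z : ℂ} {r₁ r₂ : ℝ} (hz₁ : ‖z - c₁‖ < r₁)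
    (hz₂ : ‖z - c₂‖ < r₂)
    (h : (z - c₁) / ((r₁ ^ 2 - ‖z - c₁‖ ^ 2 : ℝ) : ℂ) =
      (z - c₂) / ((r₂ ^ 2 - ‖z - c₂‖ ^ 2 : ℝ) : ℂ)) :
    ‖c₁ - c₂‖ ≤ |r₁ - r₂| := by
  set p₁ := r₁ ^ 2 - ‖z - c₁‖ ^ 2 with hp₁_def
  set p₂ := r₂ ^ 2 - ‖z - c₂‖ ^ 2 with hp₂_def
  set u := (z - c₁) / (p₁ : ℂ)
  have hp₁ : 0 < p₁ := by nlinarith [norm_nonneg (z - c₁)]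
  have hp₂ : 0 < p₂ := by nlinarith [norm_nonneg (z - c₂)]
  have ha₁ : z - c₁ = p₁ * u := (mul_div_cancel₀ _ (by exact_mod_cast hp₁.ne')).symm
  have ha₂ : z - c₂ = p₂ * u := by
    rw [h]; exact (mul_div_cancel₀ _ (by exact_mod_cast hp₂.ne')).symm
  clear_value u
  have hnorm {p : ℝ} (hp : 0 < p) : ‖(p : ℂ) * u‖ = ‖u‖ * p := by
    rw [norm_mul, Complex.norm_real, Real.norm_of_nonneg hp.le, mul_comm]
  have hc : c₁ - c₂ = ((p₂ - p₁ : ℝ) : ℂ) * u := by push_cast; linear_combination ha₂ - ha₁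
  rw [hc, norm_mul, Complex.norm_real, Real.norm_eq_abs, abs_sub_comm, mul_comm]
  refine mul_abs_sub_le_abs_sub_of_sq_eq (norm_nonneg u) hp₁.le hp₂.le
    ((norm_nonneg _).trans hz₁.le) ((norm_nonneg _).trans hz₂.le) ?_ ?_
  · rw [← hnorm hp₁, ← ha₁, hp₁_def]; ring
  · rw [← hnorm hp₂, ← ha₂, hp₂_def]; ring

theorem gamma_points_distinct_general
    (c₁ c₂ : ℂ) (r₁ r₂ : ℝ)
    (h : ‖c₁ - c₂‖ > |r₁ - r₂|)
    (z : ℂ) (hz₁ : ‖z - c₁‖ < r₁) (hz₂ : ‖z - c₂‖ < r₂) :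
    (starRingEnd ℂ) c₁ + (r₁ : ℂ) ^ 2 / (z - c₁) ≠
      (starRingEnd ℂ) c₂ + (r₂ : ℂ) ^ 2 / (z - c₂) := by
  intro heq
  exact h.not_ge (norm_sub_le_abs_sub_of_div_eq hz₁ hz₂ (div_eq_div_of_circleDual_eq heq))

/-- Pointwise form of Lemma 1: for `z` interior to two distinct circles,
neither contained in the closed disc bounded by the other, the corresponding
points of the curve `Γ_z` are distinct. -/
theorem gamma_points_distinct
    (c₁ c₂ : ℂ) (r₁ r₂ : ℝ) (hr₁ : 0 < r₁) (hr₂ : 0 < r₂)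
    (hne : (c₁, r₁) ≠ (c₂, r₂))
    (h : ‖c₁ - c₂‖ > |r₁ - r₂|)
    (z : ℂ) (hz₁ : ‖z - c₁‖ < r₁) (hz₂ : ‖z - c₂‖ < r₂) :
    (starRingEnd ℂ) c₁ + (r₁ : ℂ) ^ 2 / (z - c₁) ≠
      (starRingEnd ℂ) c₂ + (r₂ : ℂ) ^ 2 / (z - c₂) :=
  gamma_points_distinct_general c₁ c₂ r₁ r₂ h z hz₁ hz₂
end
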